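/- Fix N ≥ 1, α > 1/2, and β ≥ 0. For every integer m ≥ 1, the quenched averages of the diluted Curie–Weiss model satisfy ⟨q²_{1,…,m}⟩ ≥ ⟨m²⟩^m, where ⟨q²_{1,…,m}⟩ = E[(1/N²) Σ_{p,q∈Fin N} (ω(σ_pσ_q))^m] and ⟨m²⟩ = E[(1/N²) Σ_{p,q∈Fin N} ω(σ_pσ_q)]. -/

import Mathlib

open scoped BigOperators

/-- The set of spin values `{-1, 1}` as a finite subset of `ℝ`. -/
noncomputable abbrev SpinVal : Finset ℝ := {-1, 1}

/-- Spin configurations on `n` sites: maps `Fin n → ℝ` taking values in `{-1,1}`. -/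
abbrev Conf (n : ℕ) := Fin n → SpinVal

/-- Hamiltonian of the diluted ferromagnet for the disorder realization `(k, b)`:
`H(σ) = -Σ_{ν<k} σ_{(bν).1} σ_{(bν).2}`. -/
noncomputable def Hdil {n k : ℕ} (b : Fin k → Fin n × Fin n) (σ : Conf n) : ℝ :=
  - ∑ ν : Fin k, (σ (b ν).1 : ℝ) * (σ (b ν).2 : ℝ)

/-- Partition function of the diluted ferromagnet at inverse temperature `β`. -/
noncomputable def Zdil (n : ℕ) (β : ℝ) {k : ℕ} (b : Fin k → Fin n × Fin n) : ℝ :=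
  ∑ σ : Conf n, Real.exp (-β * Hdil b σ)

/-- Gibbs expectation `ω` of an observable for a fixed disorder realization. -/
noncomputable def gibbs (n : ℕ) (β : ℝ) {k : ℕ} (b : Fin k → Fin n × Fin n)
    (f : Conf n → ℝ) : ℝ :=
  (∑ σ : Conf n, f σ * Real.exp (-β * Hdil b σ)) / Zdil n β b

/-- The Poisson probability mass function with mean `lam`. -/
noncomputable def poissonPMF (lam : ℝ) (k : ℕ) : ℝ :=
  Real.exp (-lam) * lam ^ k / (Nat.factorial k : ℝ)

/-- Quenched expectation at connectivity `α` on `n` sites: the number of bonds `k` is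
Poisson(αn) and the `2k` endpoints are i.i.d. uniform on the `n` sites. -/
noncomputable def quenched (n : ℕ) (α : ℝ)
    (F : (k : ℕ) → (Fin k → Fin n × Fin n) → ℝ) : ℝ :=
  ∑' k : ℕ, poissonPMF (α * n) k *
    ((∑ b : Fin k → Fin n × Fin n, F k b) / ((n : ℝ) ^ 2) ^ k)

/-- Boltzmann weight of the `t`-perturbed (cavity) system with realization
`(k, b, k', l)`: `exp(β Σ_ν σσ + β Σ_μ σ_{l μ})`. -/
noncomputable def cavWeight (n : ℕ) (β : ℝ) {k k' : ℕ} (b : Fin k → Fin n × Fin n)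
    (l : Fin k' → Fin n) (σ : Conf n) : ℝ :=
  Real.exp (β * ∑ ν : Fin k, (σ (b ν).1 : ℝ) * (σ (b ν).2 : ℝ)
    + β * ∑ μ : Fin k', (σ (l μ) : ℝ))

/-- Partition function of the `t`-perturbed (cavity) system. -/
noncomputable def Zcav (n : ℕ) (β : ℝ) {k k' : ℕ} (b : Fin k → Fin n × Fin n)
    (l : Fin k' → Fin n) : ℝ :=
  ∑ σ : Conf n, cavWeight n β b l σ

/-- Gibbs expectation `ω_t` of the `t`-perturbed (cavity) system at fixed realization. -/
noncomputable def gibbsCav (n : ℕ) (β : ℝ) {k k' : ℕ} (b : Fin k → Fin n × Fin n)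
    (l : Fin k' → Fin n) (f : Conf n → ℝ) : ℝ :=
  (∑ σ : Conf n, f σ * cavWeight n β b l σ) / Zcav n β b l

/-- Quenched expectation `E_t` of the `t`-perturbed system at connectivity `αt`:
`k` is Poisson(αt·n), `k'` is Poisson(2·αt·t), and all indices are i.i.d. uniform. -/
noncomputable def quenchedCav (n : ℕ) (αt t : ℝ)
    (F : (k : ℕ) → (Fin k → Fin n × Fin n) → (k' : ℕ) → (Fin k' → Fin n) → ℝ) : ℝ :=
  ∑' k : ℕ, ∑' k' : ℕ, poissonPMF (αt * n) k * poissonPMF (2 * αt * t) k' *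
    ((∑ b : Fin k → Fin n × Fin n, ∑ l : Fin k' → Fin n, F k b k' l) /
      (((n : ℝ) ^ 2) ^ k * (n : ℝ) ^ k'))

/-- The cavity function `Ψ_n(α̃, β; t) = E_t[ln Z_{n,t}] - E[ln Z_n(α̃, β)]`. -/
noncomputable def Psi (n : ℕ) (αt β t : ℝ) : ℝ :=
  quenchedCav n αt t (fun _ b _ l => Real.log (Zcav n β b l))
    - quenched n αt (fun _ b => Real.log (Zdil n β b))

/-!
Since `β ≥ 0`, Griffiths' first inequality gives `0 ≤ ω(σ_p σ_q) ≤ 1`: writing each bond weight as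
`exp (β σ_a σ_b) = cosh β + sinh β σ_a σ_b` expands the unnormalised Gibbs sum of any spin
monomial into a nonnegative combination of sums of spin monomials, and each of these factorises
over the sites into sums `(-1)^c + 1 ≥ 0`. Jensen's inequality for `x ↦ x ^ m` on `[0, ∞)` is then
applied to the uniform average over the pairs `(p, q)`, to the uniform average over the bond
endpoints, and to the Poisson average over the number of bonds.
-/

open Finset Real MeasureTheory

section Spins

variable {n : ℕ}

instance : Nonempty SpinVal := ⟨⟨1, by simp⟩⟩

lemma spin_eq_neg_one_or_one (σ : Conf n) (i : Fin n) : (σ i : ℝ) = -1 ∨ (σ i : ℝ) = 1 := by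
  simpa only [SpinVal, mem_insert, mem_singleton] using (σ i).2

lemma spin_mul_spin_eq_neg_one_or_one (σ : Conf n) (i j : Fin n) :
    (σ i : ℝ) * σ j = -1 ∨ (σ i : ℝ) * σ j = 1 := by
  rcases spin_eq_neg_one_or_one σ i with h | h <;>
    rcases spin_eq_neg_one_or_one σ j with h' | h' <;> simp [h, h']

noncomputable def spinMonomial (c : Fin n → ℕ) (σ : Conf n) : ℝ :=
  ∏ i, (σ i : ℝ) ^ c i

lemma spinMonomial_add (c d : Fin n → ℕ) (σ : Conf n) :
    spinMonomial (c + d) σ = spinMonomial c σ * spinMonomial d σ := by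
  simp only [spinMonomial, Pi.add_apply, pow_add, prod_mul_distrib]

lemma spinMonomial_single (i : Fin n) (σ : Conf n) :
    spinMonomial (Pi.single i 1) σ = σ i := by
  simp [spinMonomial, Pi.single_apply, pow_ite]

lemma spinMonomial_pair (i j : Fin n) (σ : Conf n) :
    spinMonomial (Pi.single i 1 + Pi.single j 1) σ = σ i * σ j := by
  rw [spinMonomial_add, spinMonomial_single, spinMonomial_single]

lemma sum_spinMonomial_nonneg (c : Fin n → ℕ) : 0 ≤ ∑ σ : Conf n, spinMonomial c σ := by
  simp only [spinMonomial]
  rw [← Fintype.prod_sum fun i (s : SpinVal) => (s : ℝ) ^ c i]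
  refine prod_nonneg fun i _ => ?_
  rw [sum_coe_sort SpinVal fun s => s ^ c i, sum_pair (by norm_num)]
  rcases neg_one_pow_eq_or ℝ (c i) with h | h <;> rw [h] <;> norm_num

end Spins

section Griffiths

variable {n : ℕ} {β : ℝ}

lemma exp_mul_eq_cosh_add_sinh {x : ℝ} (hx : x = -1 ∨ x = 1) :
    exp (β * x) = cosh β + sinh β * x := by
  rcases hx with rfl | rfl
  · simp [← cosh_sub_sinh, sub_eq_add_neg]
  · simp [cosh_add_sinh]

theorem sum_spinMonomial_mul_prod_exp_nonneg (hβ : 0 ≤ β) {ι : Type*} (e : ι → Fin n × Fin n)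
    (s : Finset ι) (c : Fin n → ℕ) :
    0 ≤ ∑ σ : Conf n, spinMonomial c σ * ∏ ν ∈ s, exp (β * ((σ (e ν).1 : ℝ) * σ (e ν).2)) := by
  classical
  induction s using Finset.induction_on generalizing c with
  | empty => simpa using sum_spinMonomial_nonneg c
  | insert ν s hν ih =>
    set bond : Fin n → ℕ := Pi.single (e ν).1 1 + Pi.single (e ν).2 1
    have expand : ∀ σ : Conf n,
        spinMonomial c σ * ∏ μ ∈ insert ν s, exp (β * ((σ (e μ).1 : ℝ) * σ (e μ).2)) =
          cosh β * (spinMonomial c σ * ∏ μ ∈ s, exp (β * ((σ (e μ).1 : ℝ) * σ (e μ).2))) +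
          sinh β * (spinMonomial (c + bond) σ *
            ∏ μ ∈ s, exp (β * ((σ (e μ).1 : ℝ) * σ (e μ).2))) := by
      intro σ
      rw [prod_insert hν, exp_mul_eq_cosh_add_sinh (spin_mul_spin_eq_neg_one_or_one σ _ _),
        spinMonomial_add, spinMonomial_pair]
      ring
    simp only [expand, sum_add_distrib, ← mul_sum]
    exact add_nonneg (mul_nonneg (cosh_pos β).le (ih c))
      (mul_nonneg (sinh_nonneg_iff.2 hβ) (ih (c + bond)))

end Griffiths

section Gibbs

variable {n k : ℕ} {β : ℝ}

lemma Zdil_pos (b : Fin k → Fin n × Fin n) : 0 < Zdil n β b :=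
  sum_pos (fun _ _ => exp_pos _) univ_nonempty

lemma exp_neg_mul_Hdil (b : Fin k → Fin n × Fin n) (σ : Conf n) :
    exp (-β * Hdil b σ) = ∏ ν, exp (β * ((σ (b ν).1 : ℝ) * σ (b ν).2)) := by
  rw [← exp_sum, Hdil, ← mul_sum, neg_mul_neg]

lemma gibbs_le_one (b : Fin k → Fin n × Fin n) {f : Conf n → ℝ} (hf : ∀ σ, f σ ≤ 1) :
    gibbs n β b f ≤ 1 := by
  rw [gibbs, div_le_one (Zdil_pos b), Zdil]
  exact sum_le_sum fun σ _ => mul_le_of_le_one_left (exp_pos _).le (hf σ)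

lemma gibbs_spin_mul_spin_nonneg (hβ : 0 ≤ β) (b : Fin k → Fin n × Fin n) (p q : Fin n) :
    0 ≤ gibbs n β b (fun σ => (σ p : ℝ) * σ q) := by
  refine div_nonneg ?_ (Zdil_pos b).le
  have griffiths := sum_spinMonomial_mul_prod_exp_nonneg hβ b univ (Pi.single p 1 + Pi.single q 1)
  simp_rw [spinMonomial_pair] at griffiths
  simpa only [exp_neg_mul_Hdil] using griffiths

lemma gibbs_spin_mul_spin_mem_Icc (hβ : 0 ≤ β) (b : Fin k → Fin n × Fin n) (p q : Fin n) :
    gibbs n β b (fun σ => (σ p : ℝ) * σ q) ∈ Set.Icc 0 1 :=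
  ⟨gibbs_spin_mul_spin_nonneg hβ b p q, gibbs_le_one b fun σ =>
    (spin_mul_spin_eq_neg_one_or_one σ p q).elim (fun h => by linarith) (fun h => h.le)⟩

end Gibbs

section Jensen

lemma pow_mem_Icc_zero_one {x : ℝ} (hx : x ∈ Set.Icc 0 1) (m : ℕ) : x ^ m ∈ Set.Icc 0 1 :=
  ⟨pow_nonneg hx.1 m, pow_le_one₀ hx.1 hx.2⟩

variable {ι : Type*} [Fintype ι] {z : ι → ℝ}

lemma sum_div_card_mem_Icc (hz : ∀ i, z i ∈ Set.Icc 0 1) :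
    (∑ i, z i) / Fintype.card ι ∈ Set.Icc 0 1 := by
  refine ⟨div_nonneg (sum_nonneg fun i _ => (hz i).1) (Nat.cast_nonneg _),
    div_le_one_of_le₀ ?_ (Nat.cast_nonneg _)⟩
  simpa using sum_le_card_nsmul univ z 1 fun i _ => (hz i).2

lemma pow_sum_div_card_le_sum_pow_div_card [Nonempty ι] (hz : ∀ i, 0 ≤ z i) (m : ℕ) :
    ((∑ i, z i) / Fintype.card ι) ^ m ≤ (∑ i, z i ^ m) / Fintype.card ι := by
  have hcard : (Fintype.card ι : ℝ) ≠ 0 := Nat.cast_ne_zero.2 Fintype.card_ne_zero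
  simpa only [inv_mul_eq_div, ← sum_div] using
    Real.pow_arith_mean_le_arith_mean_pow univ (fun _ => (Fintype.card ι : ℝ)⁻¹) z
      (fun _ _ => by positivity) (by simp [hcard]) (fun i _ => hz i) m

lemma integrable_of_mem_Icc {μ : Measure ℕ} [IsFiniteMeasure μ] {f : ℕ → ℝ}
    (hf : ∀ k, f k ∈ Set.Icc 0 1) : Integrable f μ :=
  Integrable.of_bound .of_discrete 1 <| ae_of_all _ fun k => by
    rw [norm_of_nonneg (hf k).1]
    exact (hf k).2

end Jensen

section Quenched

open ProbabilityTheory (poissonMeasure integral_poissonMeasure)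

variable {n : ℕ} {α : ℝ} {F G : (k : ℕ) → (Fin k → Fin n × Fin n) → ℝ}

lemma quenched_eq_integral (hα : 0 ≤ α) (F : (k : ℕ) → (Fin k → Fin n × Fin n) → ℝ) :
    quenched n α F = ∫ k, (∑ b, F k b) / Fintype.card (Fin k → Fin n × Fin n)
      ∂poissonMeasure (α * n).toNNReal := by
  rw [integral_poissonMeasure, quenched, coe_toNNReal _ (by positivity)]
  simp [poissonPMF, sq]

lemma quenched_mono (hα : 0 ≤ α) (hF : ∀ k b, F k b ∈ Set.Icc 0 1)
    (hG : ∀ k b, G k b ∈ Set.Icc 0 1) (hFG : ∀ k b, F k b ≤ G k b) :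
    quenched n α F ≤ quenched n α G := by
  rw [quenched_eq_integral hα, quenched_eq_integral hα]
  exact integral_mono (integrable_of_mem_Icc fun k => sum_div_card_mem_Icc (hF k))
    (integrable_of_mem_Icc fun k => sum_div_card_mem_Icc (hG k))
    fun k => div_le_div_of_nonneg_right (sum_le_sum fun b _ => hFG k b) (Nat.cast_nonneg _)

theorem pow_quenched_le_quenched_pow (hn : 0 < n) (hα : 0 ≤ α)
    (hF : ∀ k b, F k b ∈ Set.Icc 0 1) (m : ℕ) :
    quenched n α F ^ m ≤ quenched n α (fun k b => F k b ^ m) := by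
  have : Nonempty (Fin n) := ⟨⟨0, hn⟩⟩
  have hmean : ∀ k, (∑ b, F k b) / Fintype.card (Fin k → Fin n × Fin n) ∈ Set.Icc 0 1 :=
    fun k => sum_div_card_mem_Icc (hF k)
  rw [quenched_eq_integral hα, quenched_eq_integral hα]
  calc _ ≤ ∫ k, ((∑ b, F k b) / Fintype.card (Fin k → Fin n × Fin n)) ^ m
        ∂poissonMeasure (α * n).toNNReal :=
      (convexOn_pow m).map_integral_le (continuous_pow m).continuousOn isClosed_Ici
        (ae_of_all _ fun k => (hmean k).1) (integrable_of_mem_Icc hmean)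
        (integrable_of_mem_Icc fun k => pow_mem_Icc_zero_one (hmean k) m)
    _ ≤ _ :=
      integral_mono (integrable_of_mem_Icc fun k => pow_mem_Icc_zero_one (hmean k) m)
        (integrable_of_mem_Icc fun k =>
          sum_div_card_mem_Icc fun b => pow_mem_Icc_zero_one (hF k b) m)
        fun k => pow_sum_div_card_le_sum_pow_div_card (fun b => (hF k b).1) m

end Quenched

theorem overlap_ge_magnetization_pow_general (N : ℕ) (hN : 1 ≤ N) (α : ℝ) (hα : 1 / 2 < α)
    (β : ℝ) (hβ : 0 ≤ β) (m : ℕ) :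
    (quenched N α (fun _ b => (1 / (N : ℝ) ^ 2) * ∑ p : Fin N, ∑ q : Fin N,
        gibbs N β b (fun σ => (σ p : ℝ) * (σ q : ℝ)))) ^ m
      ≤ quenched N α (fun _ b => (1 / (N : ℝ) ^ 2) * ∑ p : Fin N, ∑ q : Fin N,
          (gibbs N β b (fun σ => (σ p : ℝ) * (σ q : ℝ))) ^ m) := by
  have : Nonempty (Fin N) := ⟨⟨0, hN⟩⟩
  have pair_average : ∀ f : Fin N → Fin N → ℝ, 1 / (N : ℝ) ^ 2 * ∑ p, ∑ q, f p q =
      (∑ pq : Fin N × Fin N, f pq.1 pq.2) / Fintype.card (Fin N × Fin N) := by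
    intro f
    rw [Fintype.sum_prod_type, Fintype.card_prod, Fintype.card_fin, one_div_mul_eq_div]
    push_cast
    ring
  have hg : ∀ k (b : Fin k → Fin N × Fin N) (pq : Fin N × Fin N),
      gibbs N β b (fun σ => (σ pq.1 : ℝ) * σ pq.2) ∈ Set.Icc 0 1 :=
    fun _ b pq => gibbs_spin_mul_spin_mem_Icc hβ b pq.1 pq.2
  have hmean := fun k b => sum_div_card_mem_Icc (hg k b)
  simp only [pair_average]
  refine (pow_quenched_le_quenched_pow hN (by linarith) hmean m).trans
    (quenched_mono (by linarith) (fun k b => pow_mem_Icc_zero_one (hmean k b) m) ?_ ?_)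
  · exact fun k b => sum_div_card_mem_Icc fun pq => pow_mem_Icc_zero_one (hg k b pq) m
  · exact fun k b => pow_sum_div_card_le_sum_pow_div_card (fun pq => (hg k b pq).1) m

/-- **Multi-overlaps dominate powers of the magnetization (quenched form).** For every
`m ≥ 1` the quenched averages of the diluted Curie–Weiss model satisfy
`⟨q²_{1,…,m}⟩ ≥ ⟨m²⟩^m`, where
`⟨q²_{1,…,m}⟩ = E[(1/N²) Σ_{p,q} (ω(σ_pσ_q))^m]` and
`⟨m²⟩ = E[(1/N²) Σ_{p,q} ω(σ_pσ_q)]`. -/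
theorem overlap_ge_magnetization_pow (N : ℕ) (hN : 1 ≤ N) (α : ℝ) (hα : 1 / 2 < α)
    (β : ℝ) (hβ : 0 ≤ β) (m : ℕ) (hm : 1 ≤ m) :
    (quenched N α (fun _ b => (1 / (N : ℝ) ^ 2) * ∑ p : Fin N, ∑ q : Fin N,
        gibbs N β b (fun σ => (σ p : ℝ) * (σ q : ℝ)))) ^ m
      ≤ quenched N α (fun _ b => (1 / (N : ℝ) ^ 2) * ∑ p : Fin N, ∑ q : Fin N,
          (gibbs N β b (fun σ => (σ p : ℝ) * (σ q : ℝ))) ^ m) :=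
  overlap_ge_magnetization_pow_general N hN α hα β hβ m
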